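/- Let ω = (ω₀, …, ω_{n+1}) be a primitive algebraic key sequence. Then for each k with 1 ≤ k ≤ n, the integer β_{k,0} in the unique representation α_k·ω_k = Σ_{j=0}^{k−1} β_{k,j}·ω_j with 0 ≤ β_{k,j} < α_j for 1 ≤ j ≤ k−1 is nonnegative. -/

import Mathlib

/-!
The relations `α_k ω_k = ∑_{j<k} c_j ω_j` with `c_j ≥ 0` let one rewrite any nonnegative
combination of `ω₀, …, ω_{k-1}` as one whose digits satisfy `0 ≤ b_j < α_j` for `j ≥ 1`: divide the
top digit by `α_j` and push the quotient through the relation, which only adds nonnegative amounts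
to the lower digits. Such digit expansions are unique, since `d_{j-1}` divides the lower part of a
combination, and `d_{j-1} ∣ γ ω_j` forces `α_j ∣ γ`. Hence `β_{k,0}` is the digit `b_0 ≥ 0` of the
expansion obtained from the nonnegative representation of `α_k ω_k`.
-/

/-- `dks ω k` is `gcd(|ω₀|, …, |ω_k|)`. -/
def dks (ω : ℕ → ℤ) (k : ℕ) : ℕ :=
  (Finset.range (k + 1)).gcd fun j => (ω j).natAbs

/-- `alphaK ω k` is `α_k = d_{k−1}/d_k`. -/
def alphaK (ω : ℕ → ℤ) (k : ℕ) : ℕ := dks ω (k - 1) / dks ω k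

/-- A key sequence `(ω₀, …, ω_{n+1})`. -/
def IsKeySequence (n : ℕ) (ω : ℕ → ℤ) : Prop :=
  1 ≤ ω 0 ∧ dks ω (n + 1) = 1 ∧
    ∀ k, 1 ≤ k → k ≤ n → ω (k + 1) < (alphaK ω k : ℤ) * ω k

/-- A key sequence is primitive iff `ω_{n+1} > 0`. -/
def IsPrimitive (n : ℕ) (ω : ℕ → ℤ) : Prop := 0 < ω (n + 1)

/-- A primitive key sequence is algebraic iff `α_k·ω_k` lies in the sub-semigroup of `ℤ`
generated by `ω₀, …, ω_{k−1}` (nonnegative integer combinations) for `1 ≤ k ≤ n`. -/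
def IsAlgebraicKeySeq (n : ℕ) (ω : ℕ → ℤ) : Prop :=
  ∀ k, 1 ≤ k → k ≤ n → ∃ c : ℕ → ℕ,
    (alphaK ω k : ℤ) * ω k = ∑ j ∈ Finset.range k, (c j : ℤ) * ω j

open Finset

section KeySequence

lemma dks_succ (ω : ℕ → ℤ) (j : ℕ) :
    dks ω (j + 1) = Nat.gcd (ω (j + 1)).natAbs (dks ω j) := by
  rw [dks, range_add_one, gcd_insert]
  rfl

lemma alphaK_succ_mul_dks (ω : ℕ → ℤ) (j : ℕ) :
    alphaK ω (j + 1) * dks ω (j + 1) = dks ω j := by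
  rw [alphaK, Nat.add_sub_cancel, Nat.div_mul_cancel]
  exact dks_succ ω j ▸ Nat.gcd_dvd_right _ _

variable {ω : ℕ → ℤ}

lemma dks_pos (h0 : ω 0 ≠ 0) (k : ℕ) : 0 < dks ω k := by
  refine Nat.pos_of_ne_zero fun h => h0 ?_
  simpa using Finset.gcd_eq_zero_iff.mp h 0 (by simp)

lemma dks_dvd {i k : ℕ} (hik : i ≤ k) : (dks ω k : ℤ) ∣ ω i :=
  Int.natCast_dvd.mpr <| Finset.gcd_dvd (f := fun j => (ω j).natAbs) (mem_range.mpr (by omega))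

lemma dks_dvd_sum (γ : ℕ → ℤ) (k : ℕ) : (dks ω k : ℤ) ∣ ∑ j ∈ range (k + 1), γ j * ω j :=
  dvd_sum fun _ hj => (dks_dvd (Nat.lt_succ_iff.mp (mem_range.mp hj))).mul_left _

lemma alphaK_pos (h0 : ω 0 ≠ 0) {j : ℕ} (hj : 1 ≤ j) : 0 < alphaK ω j := by
  obtain ⟨i, rfl⟩ := Nat.exists_eq_add_of_le' hj
  exact Nat.pos_of_mul_pos_right <| (alphaK_succ_mul_dks ω i).symm ▸ dks_pos h0 i

lemma alphaK_dvd_of_dks_dvd_mul (h0 : ω 0 ≠ 0) {j : ℕ} {γ : ℤ}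
    (h : (dks ω j : ℤ) ∣ γ * ω (j + 1)) : (alphaK ω (j + 1) : ℤ) ∣ γ := by
  have hgcd : gcd (dks ω j : ℤ) (ω (j + 1)) = dks ω (j + 1) := by
    rw [← Int.coe_gcd, dks_succ, Nat.gcd_comm]
    rfl
  have h' := dvd_mul_gcd_of_dvd_mul h
  rw [hgcd, ← alphaK_succ_mul_dks, Nat.cast_mul] at h'
  exact (mul_dvd_mul_iff_right (by exact_mod_cast (dks_pos h0 (j + 1)).ne')).mp h'

lemma digits_eq_zero_of_sum_eq_zero (h0 : ω 0 ≠ 0) {m : ℕ} {γ : ℕ → ℤ}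
    (hγ : ∀ j, 1 ≤ j → j < m → |γ j| < alphaK ω j)
    (hsum : ∑ j ∈ range m, γ j * ω j = 0) : ∀ j < m, γ j = 0 := by
  induction m with
  | zero => simp
  | succ m ih =>
    have htop : γ m = 0 := by
      cases m with
      | zero => simpa [h0] using hsum
      | succ i =>
        rw [sum_range_succ, add_eq_zero_iff_eq_neg'] at hsum
        have hdvd : (dks ω i : ℤ) ∣ γ (i + 1) * ω (i + 1) := hsum ▸ (dks_dvd_sum γ i).neg_right
        exact Int.eq_zero_of_abs_lt_dvd (alphaK_dvd_of_dks_dvd_mul h0 hdvd)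
          (hγ _ (by omega) (by omega))
    rw [sum_range_succ, htop, zero_mul, add_zero] at hsum
    intro j hj
    rcases Nat.lt_succ_iff_lt_or_eq.mp hj with hj | rfl
    · exact ih (fun i hi₁ hi₂ => hγ i hi₁ (by omega)) hsum j hj
    · exact htop

lemma exists_digits_lt_alphaK (h0 : ω 0 ≠ 0) {m : ℕ}
    (halg : ∀ k, 1 ≤ k → k < m → ∃ c : ℕ → ℕ,
      (alphaK ω k : ℤ) * ω k = ∑ j ∈ range k, (c j : ℤ) * ω j)
    (c : ℕ → ℕ) : ∃ b : ℕ → ℕ, (∀ j, 1 ≤ j → j < m → b j < alphaK ω j) ∧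
      ∑ j ∈ range m, (b j : ℤ) * ω j = ∑ j ∈ range m, (c j : ℤ) * ω j := by
  induction m generalizing c with
  | zero => exact ⟨c, by omega, rfl⟩
  | succ m ih =>
    rcases Nat.eq_zero_or_pos m with rfl | hm
    · exact ⟨c, by omega, rfl⟩
    obtain ⟨a, ha⟩ := halg m hm (by omega)
    set q := c m / alphaK ω m
    set r := c m % alphaK ω m
    obtain ⟨b, hb_lt, hb_sum⟩ := ih (fun k hk₁ hk₂ => halg k hk₁ (by omega)) (c + q • a)
    refine ⟨Function.update b m r, fun j hj₁ hj₂ => ?_, ?_⟩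
    · rcases Nat.lt_succ_iff_lt_or_eq.mp hj₂ with hj | rfl
      · simpa [hj.ne] using hb_lt j hj₁ hj
      · simpa [r] using Nat.mod_lt _ (alphaK_pos h0 hj₁)
    · have hcm : (c m : ℤ) = q * alphaK ω m + r := by
        exact_mod_cast (mul_comm q _ ▸ Nat.div_add_mod (c m) (alphaK ω m)).symm
      have hlower : ∑ j ∈ range m, (Function.update b m r j : ℤ) * ω j
          = ∑ j ∈ range m, (b j : ℤ) * ω j :=
        sum_congr rfl fun j hj => by simp [(mem_range.mp hj).ne]
      have hpush : ∑ j ∈ range m, ((c + q • a) j : ℤ) * ω j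
          = ∑ j ∈ range m, (c j : ℤ) * ω j + q * (alphaK ω m * ω m) := by
        rw [ha, mul_sum, ← sum_add_distrib]
        refine sum_congr rfl fun j _ => ?_
        simp only [Pi.add_apply, Pi.smul_apply, smul_eq_mul]
        push_cast
        ring
      rw [sum_range_succ, sum_range_succ, hlower, hb_sum, hpush, Function.update_self, hcm]
      ring

end KeySequence

theorem stmt1_general (n : ℕ) (ω : ℕ → ℤ) (hω : IsKeySequence n ω)
    (halg : IsAlgebraicKeySeq n ω)
    (k : ℕ) (hk1 : 1 ≤ k) (hkn : k ≤ n) (β : ℕ → ℤ)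
    (hβ : ∀ j, 1 ≤ j → j < k → 0 ≤ β j ∧ β j < (alphaK ω j : ℤ))
    (hrep : (alphaK ω k : ℤ) * ω k = ∑ j ∈ Finset.range k, β j * ω j) :
    0 ≤ β 0 := by
  have h0 : ω 0 ≠ 0 := by linarith [hω.1]
  obtain ⟨c, hc⟩ := halg k hk1 hkn
  obtain ⟨b, hb_lt, hb_sum⟩ :=
    exists_digits_lt_alphaK h0 (m := k) (fun i hi₁ hi₂ => halg i hi₁ (by omega)) c
  have hdiff : ∑ j ∈ range k, (β j - b j) * ω j = 0 := by
    simp only [sub_mul, sum_sub_distrib, ← hrep, hb_sum, hc, sub_self]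
  have hsmall : ∀ j, 1 ≤ j → j < k → |β j - b j| < alphaK ω j := fun j hj₁ hj₂ => by
    have := hβ j hj₁ hj₂
    have := hb_lt j hj₁ hj₂
    rw [abs_lt]
    omega
  have := digits_eq_zero_of_sum_eq_zero h0 hsmall hdiff 0 (by omega)
  omega

/-- For a primitive algebraic key sequence, in the unique representation
`α_k·ω_k = Σ_{j=0}^{k−1} β_{k,j}·ω_j` with `0 ≤ β_{k,j} < α_j` for `1 ≤ j ≤ k−1`,
the coefficient `β_{k,0}` is nonnegative. -/
theorem stmt1 (n : ℕ) (ω : ℕ → ℤ) (hω : IsKeySequence n ω)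
    (hprim : IsPrimitive n ω) (halg : IsAlgebraicKeySeq n ω)
    (k : ℕ) (hk1 : 1 ≤ k) (hkn : k ≤ n) (β : ℕ → ℤ)
    (hβ : ∀ j, 1 ≤ j → j < k → 0 ≤ β j ∧ β j < (alphaK ω j : ℤ))
    (hrep : (alphaK ω k : ℤ) * ω k = ∑ j ∈ Finset.range k, β j * ω j) :
    0 ≤ β 0 :=
  stmt1_general n ω hω halg k hk1 hkn β hβ hrep
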